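/- Under the stability assumption, for any fixed β ∈ (0,1), the asymptotic normalized risk of fixed surprise highlighting for a naive agent, namely E[(1/d) Σ_{j=1}^{⌊βd⌋} 1(X*_{d,(j)}=0)(X*_{d,(j)} − p*_{d,(j)})² + (1/d) Σ_{j=⌊βd⌋+1}^{d} (X*_{d,(j)} − p*_{d,(j)})²] = (1/d) Σ_{j=1}^{⌊βd⌋} (p*_{d,(j)})²(1 − p*_{d,(j)}) + (1/d) Σ_{j=⌊βd⌋+1}^{d} p*_{d,(j)}(1 − p*_{d,(j)}), converges as d → ∞ to ∫_0^β (Q*(q))²(1 − Q*(q)) dq + ∫_β^1 Q*(q)(1 − Q*(q)) dq. -/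

import Mathlib

/-!
Each `X*` is Bernoulli(`p*`), so the expected risk is computed term by term: a highlighted
coordinate contributes `p*² (1 - p*)`, an unhighlighted one `p* (1 - p*)`.

For the limit, write `v_d j = p*_{d,(j)}` for the sorted values. The normalized sums are integrals
over `[0,1]` of step functions built from `q ↦ v_d ⌊q d⌋`. The empirical distribution function of
the `p*` converges to `F*` at every point of `[0,1]`, and since the `v_d j` are sorted, counting
turns this into `v_d ⌊q d⌋ → Q*(q)` at every point where the monotone `Q*` is right-continuous,
hence almost everywhere. Dominated convergence then gives the limit.
-/

open Finset MeasureTheory ProbabilityTheory Filter Topology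

section Bernoulli

variable {Ω : Type*} [MeasurableSpace Ω]

structure IsBernoulli (Y : Ω → ℝ) (μ : Measure Ω) (r : ℝ) : Prop where
  measurable : Measurable Y
  zero_or_one : ∀ ω, Y ω = 0 ∨ Y ω = 1
  measure_eq_one : μ {ω | Y ω = 1} = ENNReal.ofReal r

variable {μ : Measure Ω} {Y : Ω → ℝ} {r : ℝ}

namespace IsBernoulli

theorem comp_eq_indicator (hY : IsBernoulli Y μ r) (φ : ℝ → ℝ) :
    (fun ω => φ (Y ω)) = fun ω =>
      {ω | Y ω = 1}.indicator (fun _ => φ 1) ω + {ω | Y ω = 1}ᶜ.indicator (fun _ => φ 0) ω := by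
  funext ω
  rcases hY.zero_or_one ω with h | h <;> simp [Set.indicator, h]

theorem measurableSet_eq_one (hY : IsBernoulli Y μ r) : MeasurableSet {ω | Y ω = 1} :=
  hY.measurable (measurableSet_singleton 1)

theorem integrable_comp [IsFiniteMeasure μ] (hY : IsBernoulli Y μ r) (φ : ℝ → ℝ) :
    Integrable (fun ω => φ (Y ω)) μ := by
  rw [hY.comp_eq_indicator φ]
  exact ((integrable_const _).indicator hY.measurableSet_eq_one).add
    ((integrable_const _).indicator hY.measurableSet_eq_one.compl)

theorem integral_comp [IsProbabilityMeasure μ] (hY : IsBernoulli Y μ r) (hr : r ∈ Set.Icc 0 1)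
    (φ : ℝ → ℝ) : ∫ ω, φ (Y ω) ∂μ = (1 - r) * φ 0 + r * φ 1 := by
  have hs := hY.measurableSet_eq_one
  rw [hY.comp_eq_indicator φ, integral_add ((integrable_const _).indicator hs)
      ((integrable_const _).indicator hs.compl), integral_indicator_const _ hs,
    integral_indicator_const _ hs.compl, probReal_compl_eq_one_sub hs, measureReal_def,
    hY.measure_eq_one, ENNReal.toReal_ofReal hr.1, smul_eq_mul, smul_eq_mul]
  ring

theorem one_sub [IsProbabilityMeasure μ] (hY : IsBernoulli Y μ r) (hr : 0 ≤ r) :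
    IsBernoulli (fun ω => 1 - Y ω) μ (1 - r) where
  measurable := measurable_const.sub hY.measurable
  zero_or_one ω := by rcases hY.zero_or_one ω with h | h <;> simp [h]
  measure_eq_one := by
    have hset : {ω | 1 - Y ω = 1} = {ω | Y ω = 1}ᶜ := by
      ext ω
      rcases hY.zero_or_one ω with h | h <;> simp [h]
    rw [hset, prob_compl_eq_one_sub hY.measurableSet_eq_one, hY.measure_eq_one,
      ENNReal.ofReal_sub _ hr, ENNReal.ofReal_one]

/-- The paper's recoding `X ↦ X*`. -/
theorem minority [IsProbabilityMeasure μ] (hY : IsBernoulli Y μ r) (hr : 0 ≤ r) :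
    IsBernoulli (fun ω => if r ≤ 1 / 2 then Y ω else 1 - Y ω) μ (min r (1 - r)) := by
  by_cases h : r ≤ 1 / 2
  · simpa only [h, ↓reduceIte, min_eq_left (show r ≤ 1 - r by linarith)] using hY
  · simpa only [h, ↓reduceIte, min_eq_right (show 1 - r ≤ r by linarith)] using hY.one_sub hr

end IsBernoulli

theorem integral_highlighted_risk [IsProbabilityMeasure μ] {Y : ℕ → Ω → ℝ} {r : ℕ → ℝ} {m n : ℕ}
    (hY : ∀ j < n, IsBernoulli (Y j) μ (r j)) (hr : ∀ j < n, r j ∈ Set.Icc 0 1) (hmn : m ≤ n)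
    (c : ℝ) :
    ∫ ω, c * ∑ j ∈ range m, (if Y j ω = 0 then (1 : ℝ) else 0) * (Y j ω - r j) ^ 2
        + c * ∑ j ∈ Ico m n, (Y j ω - r j) ^ 2 ∂μ
      = c * ∑ j ∈ range m, r j ^ 2 * (1 - r j) + c * ∑ j ∈ Ico m n, r j * (1 - r j) := by
  have hlt_of_range : ∀ j ∈ range m, j < n := fun j hj => (mem_range.1 hj).trans_le hmn
  have hlt_of_Ico : ∀ j ∈ Ico m n, j < n := fun j hj => (mem_Ico.1 hj).2
  let highlighted (j : ℕ) (x : ℝ) : ℝ := (if x = 0 then 1 else 0) * (x - r j) ^ 2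
  let squared (j : ℕ) (x : ℝ) : ℝ := (x - r j) ^ 2
  rw [integral_add, integral_const_mul, integral_const_mul,
    integral_finsetSum _ fun j hj => (hY j (hlt_of_range j hj)).integrable_comp (highlighted j),
    integral_finsetSum _ fun j hj => (hY j (hlt_of_Ico j hj)).integrable_comp (squared j)]
  · congr 2 <;> refine sum_congr rfl fun j hj => ?_
    · rw [(hY j (hlt_of_range j hj)).integral_comp (hr j (hlt_of_range j hj)) (highlighted j)]
      simp only [highlighted, ↓reduceIte, one_ne_zero]; ring
    · rw [(hY j (hlt_of_Ico j hj)).integral_comp (hr j (hlt_of_Ico j hj)) (squared j)]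
      simp only [squared]; ring
  · exact (integrable_finsetSum _ fun j hj =>
      (hY j (hlt_of_range j hj)).integrable_comp (highlighted j)).const_mul c
  · exact (integrable_finsetSum _ fun j hj =>
      (hY j (hlt_of_Ico j hj)).integrable_comp (squared j)).const_mul c

end Bernoulli

theorem MonotoneOn.continuousWithinAt_of_add {α : Type*} [TopologicalSpace α] [LinearOrder α]
    {f g : α → ℝ} {s : Set α} {x : α} (hf : MonotoneOn f s) (hg : MonotoneOn g s) (hx : x ∈ s)
    (hfg : ContinuousWithinAt (fun y => f y + g y) s x) : ContinuousWithinAt f s x := by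
  have hdist : ∀ y ∈ s, dist (f y) (f x) ≤ dist (f y + g y) (f x + g x) := by
    intro y hy
    simp only [Real.dist_eq]
    rcases le_total x y with hxy | hyx
    · have := hf hx hy hxy; have := hg hx hy hxy
      rw [abs_of_nonneg (by linarith), abs_of_nonneg (by linarith)]; linarith
    · have := hf hy hx hyx; have := hg hy hx hyx
      rw [abs_of_nonpos (by linarith), abs_of_nonpos (by linarith)]; linarith
  refine tendsto_iff_dist_tendsto_zero.2 (squeeze_zero' (Eventually.of_forall fun _ => dist_nonneg)
    (eventually_mem_nhdsWithin.mono hdist) ?_)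
  exact tendsto_iff_dist_tendsto_zero.1 hfg

/-- `F t - F (1 - t) = Fstar t - Fstar (1 - t)` is continuous and is the sum of the two monotone
functions `F t` and `-F (1 - t)`. -/
theorem continuousOn_of_fold {F Fstar : ℝ → ℝ} (hF : MonotoneOn F (Set.Icc 0 1))
    (hFstar : ∀ t, Fstar t = if t ≤ 1 / 2 then F t + 1 - F (1 - t) else 1)
    (hcont : ContinuousOn Fstar (Set.Icc 0 1)) : ContinuousOn F (Set.Icc 0 1) := by
  have hsymm : ∀ t, F t + -F (1 - t) = Fstar t - Fstar (1 - t) := by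
    intro t
    rw [hFstar, hFstar]
    rcases lt_trichotomy t (1 / 2) with h | rfl | h
    · rw [if_pos h.le, if_neg (by linarith)]; ring
    · norm_num
    · rw [if_neg (by linarith), if_pos (by linarith), sub_sub_cancel]; ring
  have hreflect : Set.MapsTo (fun t : ℝ => 1 - t) (Set.Icc 0 1) (Set.Icc 0 1) :=
    fun t ht => ⟨by linarith [ht.2], by linarith [ht.1]⟩
  have hantitone : MonotoneOn (fun t => -F (1 - t)) (Set.Icc 0 1) :=
    fun s hs t ht hst => neg_le_neg (hF (hreflect ht) (hreflect hs) (by linarith))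
  intro x hx
  refine hF.continuousWithinAt_of_add hantitone hx ?_
  simp only [hsymm]
  exact (hcont.sub (hcont.comp (continuousOn_const.sub continuousOn_id) hreflect)) x hx

noncomputable def empiricalCDF (v : ℕ → ℝ) (d : ℕ) (t : ℝ) : ℝ :=
  #{i ∈ range d | v i ≤ t} / d

section EmpiricalCDF

variable {v : ℕ → ℝ} {d : ℕ} {t : ℝ}

theorem empiricalCDF_eq_one_div_mul_sum (v : ℕ → ℝ) (d : ℕ) (t : ℝ) :
    empiricalCDF v d t = 1 / (d : ℝ) * ∑ i ∈ range d, if v i ≤ t then (1 : ℝ) else 0 := by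
  rw [empiricalCDF, sum_boole, one_div_mul_eq_div]

theorem empiricalCDF_eq_one (hd : d ≠ 0) (hv : ∀ i < d, v i ≤ t) : empiricalCDF v d t = 1 := by
  rw [empiricalCDF, filter_true_of_mem fun i hi => hv i (mem_range.1 hi), card_range,
    div_self (Nat.cast_ne_zero.2 hd)]

theorem empiricalCDF_comp_of_bijOn {σ : ℕ → ℕ} (hσ : Set.BijOn σ (Set.Iio d) (Set.Iio d))
    (v : ℕ → ℝ) (t : ℝ) : empiricalCDF (fun j => v (σ j)) d t = empiricalCDF v d t := by
  unfold empiricalCDF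
  congr 2
  refine card_nbij σ (fun j hj => ?_) (hσ.injOn.mono fun j hj => ?_) (fun i hi => ?_)
  · simp only [mem_coe, mem_filter, mem_range] at hj ⊢
    exact ⟨hσ.mapsTo hj.1, hj.2⟩
  · simp only [mem_coe, mem_filter, mem_range] at hj
    exact hj.1
  · simp only [mem_coe, mem_filter, mem_range] at hi
    obtain ⟨j, hj, rfl⟩ := hσ.surjOn hi.1
    exact ⟨j, by simpa using ⟨hj, hi.2⟩, rfl⟩

theorem card_filter_min_one_sub_le_add_card_filter_lt (v : ℕ → ℝ) (d : ℕ) (ht : t < 1 - t) :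
    #{i ∈ range d | min (v i) (1 - v i) ≤ t} + #{i ∈ range d | v i < 1 - t}
      = #{i ∈ range d | v i ≤ t} + d := by
  have hunion : {i ∈ range d | min (v i) (1 - v i) ≤ t}
      = {i ∈ range d | v i ≤ t} ∪ {i ∈ range d | 1 - t ≤ v i} := by
    rw [← filter_or]
    exact filter_congr fun i _ => by rw [min_le_iff, sub_le_comm]
  have hdisj : Disjoint {i ∈ range d | v i ≤ t} {i ∈ range d | 1 - t ≤ v i} :=
    disjoint_filter.2 fun i _ h₁ h₂ => by linarith
  have hcompl := card_filter_add_card_filter_not (s := range d) (fun i => 1 - t ≤ v i)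
  simp only [not_le, card_range] at hcompl
  rw [hunion, card_union_of_disjoint hdisj]
  omega

theorem empiricalCDF_min_one_sub (hd : d ≠ 0) (ht : t < 1 - t) :
    empiricalCDF (fun i => min (v i) (1 - v i)) d t
      = empiricalCDF v d t + (1 - #{i ∈ range d | v i < 1 - t} / d) := by
  have hcard := congrArg (Nat.cast (R := ℝ)) (card_filter_min_one_sub_le_add_card_filter_lt v d ht)
  push_cast at hcard
  unfold empiricalCDF
  field_simp
  linarith

end EmpiricalCDF

theorem tendsto_card_filter_lt_div {p : ℕ → ℕ → ℝ} {F : ℝ → ℝ} {a s : ℝ} (has : a < s)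
    (hconv : ∀ u ∈ Set.Ioc a s, Tendsto (fun d => empiricalCDF (p d) d u) atTop (𝓝 (F u)))
    (hF : ContinuousWithinAt F (Set.Ioo a s) s) :
    Tendsto (fun d : ℕ => (#{i ∈ range d | p d i < s} : ℝ) / d) atTop (𝓝 (F s)) := by
  refine tendsto_order.2 ⟨fun b hb => ?_, fun b hb => ?_⟩
  · have := right_nhdsWithin_Ioo_neBot has
    obtain ⟨u, hbu, hu⟩ := ((hF.eventually (lt_mem_nhds hb)).and self_mem_nhdsWithin).exists
    filter_upwards [(hconv u ⟨hu.1, hu.2.le⟩).eventually (lt_mem_nhds hbu)] with d hd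
    refine hd.trans_le (div_le_div_of_nonneg_right ?_ (Nat.cast_nonneg _))
    exact_mod_cast card_le_card (monotone_filter_right _ fun i _ (h : p d i ≤ u) => h.trans_lt hu.2)
  · filter_upwards [(hconv s ⟨has, le_rfl⟩).eventually (gt_mem_nhds hb)] with d hd
    refine lt_of_le_of_lt (div_le_div_of_nonneg_right ?_ (Nat.cast_nonneg _)) hd
    exact_mod_cast card_le_card (monotone_filter_right _ fun i _ (h : p d i < s) => h.le)

theorem tendsto_empiricalCDF_min_one_sub {p : ℕ → ℕ → ℝ} {F Fstar : ℝ → ℝ} {t : ℝ}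
    (hF : ContinuousOn F (Set.Icc 0 1))
    (hconv : ∀ u ∈ Set.Icc (0 : ℝ) 1,
      Tendsto (fun d => empiricalCDF (p d) d u) atTop (𝓝 (F u)))
    (hFstar : ∀ t, Fstar t = if t ≤ 1 / 2 then F t + 1 - F (1 - t) else 1)
    (ht : t ∈ Set.Icc 0 1) :
    Tendsto (fun d => empiricalCDF (fun i => min (p d i) (1 - p d i)) d t) atTop
      (𝓝 (Fstar t)) := by
  rcases lt_or_ge t (1 / 2) with hlt | hge
  · have hstrict := tendsto_card_filter_lt_div (a := 0) (s := 1 - t) (by linarith)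
      (fun u hu => hconv u ⟨hu.1.le, by linarith [hu.2, ht.1]⟩)
      ((hF (1 - t) ⟨by linarith, by linarith [ht.1]⟩).mono fun u hu =>
        ⟨hu.1.le, by linarith [hu.2, ht.1]⟩)
    rw [hFstar, if_pos hlt.le, add_sub_assoc]
    refine ((hconv t ht).add (tendsto_const_nhds.sub hstrict)).congr' ?_
    filter_upwards [eventually_ne_atTop 0] with d hd
    exact (empiricalCDF_min_one_sub hd (by linarith)).symm
  · have hFstar_t : Fstar t = 1 := by
      rw [hFstar]
      split_ifs with hle
      · rw [show 1 - t = t by linarith]; ring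
      · rfl
    rw [hFstar_t]
    refine tendsto_const_nhds.congr' ?_
    filter_upwards [eventually_ne_atTop 0] with d hd
    refine (empiricalCDF_eq_one hd fun i _ => ?_).symm
    rcases le_total (p d i) (1 / 2) with h | h
    · exact (min_le_left _ _).trans (h.trans hge)
    · exact (min_le_right _ _).trans (by linarith)

noncomputable def quantile (G : ℝ → ℝ) (q : ℝ) : ℝ :=
  sInf {t | t ∈ Set.Icc (0 : ℝ) 1 ∧ q ≤ G t}

section Quantile

variable {G : ℝ → ℝ} {q t : ℝ}

theorem bddBelow_quantile_set (G : ℝ → ℝ) (q : ℝ) :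
    BddBelow {t | t ∈ Set.Icc (0 : ℝ) 1 ∧ q ≤ G t} :=
  ⟨0, fun _ ht => ht.1.1⟩

theorem quantile_spec (hG : ContinuousOn G (Set.Icc 0 1)) (hG1 : 1 ≤ G 1) (hq : q ≤ 1) :
    quantile G q ∈ Set.Icc 0 1 ∧ q ≤ G (quantile G q) := by
  have hclosed : IsClosed {t | t ∈ Set.Icc (0 : ℝ) 1 ∧ q ≤ G t} :=
    hG.preimage_isClosed_of_isClosed isClosed_Icc isClosed_Ici
  exact hclosed.csInf_mem ⟨1, ⟨zero_le_one, le_rfl⟩, hq.trans hG1⟩ (bddBelow_quantile_set G q)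

theorem lt_of_lt_quantile (ht : t ∈ Set.Icc 0 1) (htq : t < quantile G q) : G t < q := by
  by_contra! h
  exact (csInf_le (bddBelow_quantile_set G q) ⟨ht, h⟩).not_gt htq

theorem quantile_monotoneOn (hG1 : 1 ≤ G 1) : MonotoneOn (quantile G) (Set.Iic 1) :=
  fun _ _ _ hq' hqq' => csInf_le_csInf (bddBelow_quantile_set G _)
    ⟨1, ⟨zero_le_one, le_rfl⟩, (Set.mem_Iic.1 hq').trans hG1⟩ fun _ ht => ⟨ht.1, hqq'.trans ht.2⟩

end Quantile

theorem le_iff_lt_card_filter_le {v : ℕ → ℝ} {d j : ℕ} (hv : MonotoneOn v (Set.Iio d))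
    (hj : j < d) (t : ℝ) : v j ≤ t ↔ j < #{i ∈ range d | v i ≤ t} := by
  constructor
  · intro hjt
    have hsub : range (j + 1) ⊆ {i ∈ range d | v i ≤ t} := fun i hi => by
      have hij : i ≤ j := Nat.lt_succ_iff.1 (mem_range.1 hi)
      exact mem_filter.2 ⟨mem_range.2 (hij.trans_lt hj),
        (hv (hij.trans_lt hj) hj hij).trans hjt⟩
    simpa using card_le_card hsub
  · intro hcard
    by_contra! htj
    have hsub : {i ∈ range d | v i ≤ t} ⊆ range j := fun i hi => by
      rw [mem_filter, mem_range] at hi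
      by_contra! hji
      exact (htj.trans_le (hv hj hi.1 (not_lt.1 (mt mem_range.2 hji)))).not_ge hi.2
    simpa using (card_le_card hsub).trans_lt' hcard

theorem floor_mul_lt_of_lt_one {q : ℝ} {d : ℕ} (hq : q < 1) (hd : d ≠ 0) : ⌊q * d⌋₊ < d :=
  (Nat.floor_lt' hd).2 (by
    have : (0 : ℝ) < d := Nat.cast_pos.2 (Nat.pos_of_ne_zero hd)
    nlinarith)

theorem floor_mul_le_of_le_one {β : ℝ} (hβ : β ≤ 1) (d : ℕ) : ⌊β * d⌋₊ ≤ d :=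
  Nat.floor_le_of_le (mul_le_of_le_one_left d.cast_nonneg hβ)

theorem eventually_floor_mul_lt_floor_mul {x y : ℝ} (hx : 0 ≤ x) (hxy : x < y) :
    ∀ᶠ d : ℕ in atTop, ⌊x * d⌋₊ < ⌊y * d⌋₊ := by
  have hgap : Tendsto (fun d : ℕ => (y - x) * d) atTop atTop :=
    tendsto_natCast_atTop_atTop.const_mul_atTop (sub_pos.2 hxy)
  filter_upwards [hgap.eventually_ge_atTop 1] with d hd
  refine Nat.lt_iff_add_one_le.2 (Nat.le_floor ?_)
  push_cast
  linarith [Nat.floor_le (mul_nonneg hx d.cast_nonneg)]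

theorem eventually_floor_mul_mem_Ico_iff {α β q : ℝ} (hq : 0 ≤ q) (hqα : q ≠ α)
    (hqβ : q ≠ β) : ∀ᶠ d : ℕ in atTop, ⌊q * d⌋₊ ∈ Ico ⌊α * d⌋₊ ⌊β * d⌋₊ ↔ q ∈ Set.Ioc α β := by
  have floor_le_floor {x y : ℝ} (h : x < y) (d : ℕ) : ⌊x * d⌋₊ ≤ ⌊y * d⌋₊ :=
    Nat.floor_le_floor (mul_le_mul_of_nonneg_right h.le d.cast_nonneg)
  rcases hqα.lt_or_gt with hqα | hαq
  · filter_upwards [eventually_floor_mul_lt_floor_mul hq hqα] with d hd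
    exact iff_of_false (fun h => (mem_Ico.1 h).1.not_gt hd) fun h => h.1.not_gt hqα
  rcases hqβ.lt_or_gt with hqβ | hβq
  · filter_upwards [eventually_floor_mul_lt_floor_mul hq hqβ] with d hd
    exact iff_of_true (mem_Ico.2 ⟨floor_le_floor hαq d, hd⟩) ⟨hαq, hqβ.le⟩
  · exact Eventually.of_forall fun d => iff_of_false (fun h => (mem_Ico.1 h).2.not_ge
      (floor_le_floor hβq d)) fun h => h.2.not_gt hβq

theorem natFloor_ae_eq_restrict_Ioc (k : ℕ) :
    (fun x : ℝ => ⌊x⌋₊) =ᵐ[volume.restrict (Set.Ioc (k : ℝ) (k + 1))] fun _ => k := by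
  rw [← Measure.restrict_congr_set Ico_ae_eq_Ioc]
  filter_upwards [ae_restrict_mem measurableSet_Ico] with x hx
  exact Nat.floor_eq_on_Ico k x hx

theorem integral_comp_natFloor (c : ℕ → ℝ) (n : ℕ) :
    ∫ x in (0 : ℝ)..n, c ⌊x⌋₊ = ∑ j ∈ range n, c j := by
  have hstep (k : ℕ) : (fun x : ℝ => c ⌊x⌋₊) =ᵐ[volume.restrict (Set.Ioc (k : ℝ) (k + 1))]
      fun _ => c k :=
    (natFloor_ae_eq_restrict_Ioc k).fun_comp c
  have hint (k : ℕ) : IntervalIntegrable (fun x : ℝ => c ⌊x⌋₊) volume k (k + 1) :=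
    (intervalIntegrable_iff_integrableOn_Ioc_of_le (by linarith)).2
      ((integrableOn_const (by simp)).congr_fun_ae (hstep k).symm)
  have hadj := intervalIntegral.sum_integral_adjacent_intervals
    (f := fun x : ℝ => c ⌊x⌋₊) (a := fun k : ℕ => (k : ℝ)) (n := n) fun k _ => by
      simpa using hint k
  simp only [Nat.cast_zero, Nat.cast_add, Nat.cast_one] at hadj
  rw [← hadj]
  refine sum_congr rfl fun k _ => ?_
  rw [intervalIntegral.integral_of_le (by linarith), integral_congr_ae (hstep k),
    setIntegral_const, measureReal_def, Real.volume_Ioc, add_sub_cancel_left,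
    ENNReal.toReal_ofReal zero_le_one, one_smul]

theorem integral_comp_floor_mul (c : ℕ → ℝ) {d : ℕ} (hd : d ≠ 0) :
    ∫ q in (0 : ℝ)..1, c ⌊q * d⌋₊ = 1 / d * ∑ j ∈ range d, c j := by
  rw [intervalIntegral.integral_comp_mul_right (fun x => c ⌊x⌋₊) (Nat.cast_ne_zero.2 hd),
    zero_mul, one_mul, integral_comp_natFloor, smul_eq_mul, one_div]

theorem tendsto_apply_floor_mul_quantile {v : ℕ → ℕ → ℝ} {G : ℝ → ℝ} {q : ℝ}
    (hv : ∀ d j, j < d → v d j ∈ Set.Icc 0 1) (hvmono : ∀ d, MonotoneOn (v d) (Set.Iio d))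
    (hG : ContinuousOn G (Set.Icc 0 1)) (hG1 : 1 ≤ G 1)
    (hconv : ∀ t ∈ Set.Icc (0 : ℝ) 1,
      Tendsto (fun d => empiricalCDF (v d) d t) atTop (𝓝 (G t)))
    (hq : q ∈ Set.Ioo 0 1) (hcont : ContinuousWithinAt (quantile G) (Set.Ioo q 1) q) :
    Tendsto (fun d => v d ⌊q * d⌋₊) atTop (𝓝 (quantile G q)) := by
  have hfloor : ∀ᶠ d : ℕ in atTop, ⌊q * d⌋₊ < d ∧ (0 : ℝ) < d :=
    (eventually_ne_atTop 0).mono fun d hd =>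
      ⟨floor_mul_lt_of_lt_one hq.2 hd, Nat.cast_pos.2 (Nat.pos_of_ne_zero hd)⟩
  refine tendsto_order.2 ⟨fun a ha => ?_, fun b hb => ?_⟩
  · rcases lt_or_ge a 0 with ha0 | ha0
    · filter_upwards [hfloor] with d hd
      exact ha0.trans_le (hv d _ hd.1).1
    -- below `quantile G q` the limit CDF is `< q`, so eventually fewer than `q d` values lie there
    set t := (a + quantile G q) / 2 with ht_def
    have ht : t ∈ Set.Icc (0 : ℝ) 1 :=
      ⟨by linarith, by linarith [(quantile_spec hG hG1 hq.2.le).1.2]⟩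
    have hGt : G t < q := lt_of_lt_quantile ht (by linarith)
    filter_upwards [hfloor, (hconv t ht).eventually (gt_mem_nhds hGt)] with d hd hcdf
    have hcard : #{i ∈ range d | v d i ≤ t} ≤ ⌊q * d⌋₊ :=
      Nat.le_floor ((div_lt_iff₀ hd.2).1 hcdf).le
    have hvt : t < v d ⌊q * d⌋₊ :=
      not_le.1 fun h => ((le_iff_lt_card_filter_le (hvmono d) hd.1 t).1 h).not_ge hcard
    linarith
  · have := left_nhdsWithin_Ioo_neBot hq.2
    obtain ⟨q', hq'b, hq'⟩ :=
      ((hcont.eventually (gt_mem_nhds hb)).and self_mem_nhdsWithin).exists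
    have hspec := quantile_spec hG hG1 hq'.2.le
    have hGq' : q < G (quantile G q') := hq'.1.trans_le hspec.2
    filter_upwards [hfloor, (hconv _ hspec.1).eventually (lt_mem_nhds hGq')] with d hd hcdf
    have hcard : ⌊q * d⌋₊ < #{i ∈ range d | v d i ≤ quantile G q'} := by
      have := (lt_div_iff₀ hd.2).1 hcdf
      exact_mod_cast (Nat.floor_le (by nlinarith [hq.1])).trans_lt this
    exact ((le_iff_lt_card_filter_le (hvmono d) hd.1 _).2 hcard).trans_lt hq'b

theorem ae_tendsto_ite_floor_mul_mem_Ico {v : ℕ → ℕ → ℝ} {G φ : ℝ → ℝ}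
    (hv : ∀ d j, j < d → v d j ∈ Set.Icc 0 1) (hvmono : ∀ d, MonotoneOn (v d) (Set.Iio d))
    (hG : ContinuousOn G (Set.Icc 0 1)) (hG1 : 1 ≤ G 1)
    (hconv : ∀ t ∈ Set.Icc (0 : ℝ) 1,
      Tendsto (fun d => empiricalCDF (v d) d t) atTop (𝓝 (G t)))
    (hφ : Continuous φ) (α β : ℝ) :
    ∀ᵐ q, q ∈ Set.Ioc (0 : ℝ) 1 → Tendsto
      (fun d : ℕ => if ⌊q * d⌋₊ ∈ Ico ⌊α * d⌋₊ ⌊β * d⌋₊ then φ (v d ⌊q * d⌋₊) else 0) atTop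
      (𝓝 ((Set.Ioc α β).indicator (fun q => φ (quantile G q)) q)) := by
  -- exceptional points: `α`, `β`, `1` and the countably many jumps of the monotone quantile
  have hjumps := (quantile_monotoneOn hG1).countable_not_continuousWithinAt_Ioi
  filter_upwards [((Set.toFinite {α, β, 1}).countable.union hjumps).ae_notMem volume]
    with q hq hq01
  simp only [Set.mem_union, Set.mem_insert_iff, Set.mem_singleton_iff, Set.mem_ofPred_eq,
    Set.mem_Iic, not_or, not_and, not_not] at hq
  obtain ⟨⟨hqα, hqβ, hq1⟩, hcont⟩ := hq
  have hqI : q ∈ Set.Ioo 0 1 := ⟨hq01.1, lt_of_le_of_ne hq01.2 hq1⟩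
  have hmem := eventually_floor_mul_mem_Ico_iff hq01.1.le hqα hqβ
  by_cases hqαβ : q ∈ Set.Ioc α β
  · rw [Set.indicator_of_mem hqαβ]
    have hcont' : ContinuousWithinAt (quantile G) (Set.Ioc q 1) q := by
      simpa only [Set.Iic_inter_Ioi] using hcont hq01.2
    refine ((hφ.tendsto _).comp (tendsto_apply_floor_mul_quantile hv hvmono hG hG1 hconv hqI
      (hcont'.mono Set.Ioo_subset_Ioc_self))).congr' (hmem.mono fun d hd => ?_)
    simp only [Function.comp_apply, if_pos (hd.2 hqαβ)]
  · rw [Set.indicator_of_notMem hqαβ]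
    exact tendsto_const_nhds.congr' (hmem.mono fun d hd => by simp only [if_neg (mt hd.1 hqαβ)])

theorem tendsto_one_div_mul_sum_Ico_floor_mul {v : ℕ → ℕ → ℝ} {G φ : ℝ → ℝ} {α β : ℝ}
    (hv : ∀ d j, j < d → v d j ∈ Set.Icc 0 1) (hvmono : ∀ d, MonotoneOn (v d) (Set.Iio d))
    (hG : ContinuousOn G (Set.Icc 0 1)) (hG1 : 1 ≤ G 1)
    (hconv : ∀ t ∈ Set.Icc (0 : ℝ) 1,
      Tendsto (fun d => empiricalCDF (v d) d t) atTop (𝓝 (G t)))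
    (hφ : Continuous φ) (hα : 0 ≤ α) (hαβ : α ≤ β) (hβ : β ≤ 1) :
    Tendsto (fun d : ℕ => 1 / (d : ℝ) * ∑ j ∈ Ico ⌊α * d⌋₊ ⌊β * d⌋₊, φ (v d j)) atTop
      (𝓝 (∫ q in α..β, φ (quantile G q))) := by
  let c (d j : ℕ) : ℝ := if j ∈ Ico ⌊α * d⌋₊ ⌊β * d⌋₊ then φ (v d j) else 0
  have hsum : ∀ᶠ d : ℕ in atTop, ∫ q in (0 : ℝ)..1, c d ⌊q * d⌋₊
      = 1 / (d : ℝ) * ∑ j ∈ Ico ⌊α * d⌋₊ ⌊β * d⌋₊, φ (v d j) := by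
    filter_upwards [eventually_ne_atTop 0] with d hd
    rw [integral_comp_floor_mul _ hd, sum_ite_mem, inter_eq_right.2 fun j hj =>
      mem_range.2 ((mem_Ico.1 hj).2.trans_le (floor_mul_le_of_le_one hβ d))]
  have hlim : ∫ q in (0 : ℝ)..1, (Set.Ioc α β).indicator (fun q => φ (quantile G q)) q
      = ∫ q in α..β, φ (quantile G q) := by
    rw [intervalIntegral.integral_of_le zero_le_one, setIntegral_indicator measurableSet_Ioc,
      Set.inter_eq_right.2 (Set.Ioc_subset_Ioc hα hβ), intervalIntegral.integral_of_le hαβ]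
  obtain ⟨C, hC⟩ := (isCompact_Icc (a := (0 : ℝ)) (b := 1)).exists_bound_of_continuousOn
    hφ.continuousOn
  have hbound : ∀ᶠ d : ℕ in atTop, ∀ᵐ q, q ∈ Set.uIoc (0 : ℝ) 1 → ‖c d ⌊q * d⌋₊‖ ≤ C := by
    filter_upwards [eventually_ne_atTop 0] with d hd
    filter_upwards [(Set.countable_singleton (1 : ℝ)).ae_notMem volume] with q hq1 hq
    rw [Set.uIoc_of_le zero_le_one] at hq
    have hlt : ⌊q * d⌋₊ < d := floor_mul_lt_of_lt_one (lt_of_le_of_ne hq.2 hq1) hd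
    simp only [c]
    split_ifs
    · exact hC _ (hv d _ hlt)
    · simpa using (norm_nonneg _).trans (hC 0 ⟨le_rfl, zero_le_one⟩)
  have hpointwise : ∀ᵐ q, q ∈ Set.uIoc (0 : ℝ) 1 → Tendsto (fun d => c d ⌊q * d⌋₊) atTop
      (𝓝 ((Set.Ioc α β).indicator (fun q => φ (quantile G q)) q)) := by
    filter_upwards [ae_tendsto_ite_floor_mul_mem_Ico hv hvmono hG hG1 hconv hφ α β] with q hq hq01
    exact hq (by rwa [Set.uIoc_of_le zero_le_one] at hq01)
  have hmeas : ∀ᶠ d : ℕ in atTop, AEStronglyMeasurable (fun q : ℝ => c d ⌊q * d⌋₊)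
      (volume.restrict (Set.uIoc 0 1)) :=
    Eventually.of_forall fun d => ((measurable_from_nat (f := c d)).comp
      (Nat.measurable_floor.comp (measurable_id.mul_const _))).aestronglyMeasurable
  rw [← hlim]
  exact (intervalIntegral.tendsto_integral_filter_of_dominated_convergence _ hmeas hbound
    intervalIntegrable_const hpointwise).congr' hsum

theorem stmt_5_general
    -- the triangular array of independent Bernoulli random variables
    {Ω : ℕ → Type*} [∀ d, MeasurableSpace (Ω d)]
    (μ : ∀ d, Measure (Ω d)) [∀ d, IsProbabilityMeasure (μ d)]
    (p : ℕ → ℕ → ℝ) (hp : ∀ d i, i < d → p d i ∈ Set.Icc (0 : ℝ) 1)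
    (X : ∀ d, ℕ → Ω d → ℝ)
    (hmeas : ∀ d i, Measurable (X d i))
    (hval : ∀ d i ω, X d i ω = 0 ∨ X d i ω = 1)
    (hbern : ∀ d i, i < d → μ d {ω | X d i ω = 1} = ENNReal.ofReal (p d i))
    -- transformed quantities
    (pstar : ℕ → ℕ → ℝ)
    (hpstar : ∀ d i, pstar d i = min (p d i) (1 - p d i))
    (Xstar : ∀ d, ℕ → Ω d → ℝ)
    (hXstar : ∀ d i ω,
      Xstar d i ω = if p d i ≤ 1 / 2 then X d i ω else 1 - X d i ω)
    -- an ordering of {0,…,d−1} making `pstar` nondecreasing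
    (ord : ℕ → ℕ → ℕ)
    (hord_bij : ∀ d, Set.BijOn (ord d) (Set.Iio d) (Set.Iio d))
    (hord_mono : ∀ d j j', j ≤ j' → j' < d →
      pstar d (ord d j) ≤ pstar d (ord d j'))
    -- the stability assumption
    (F : ℝ → ℝ)
    (hF_mono : MonotoneOn F (Set.Icc 0 1))
    (hstab : ∀ t ∈ Set.Icc (0 : ℝ) 1, ContinuousWithinAt F (Set.Icc 0 1) t →
      Tendsto (fun d : ℕ => (1 / (d : ℝ)) *
          ∑ i ∈ Finset.range d, (if p d i ≤ t then (1 : ℝ) else 0))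
        atTop (nhds (F t)))
    -- the transformed cdf and its quantile function
    (Fstar : ℝ → ℝ)
    (hFstar : ∀ t, Fstar t = if t ≤ 1 / 2 then F t + 1 - F (1 - t) else 1)
    (hFstar_cont : ContinuousOn Fstar (Set.Icc 0 1))
    (Qstar : ℝ → ℝ)
    (hQ : ∀ q, Qstar q = sInf {t | t ∈ Set.Icc (0 : ℝ) 1 ∧ q ≤ Fstar t})
    (β : ℝ) (hβ : β ∈ Set.Ioo (0 : ℝ) 1) :
    -- the normalized naive risk equals the deterministic sum …
    (∀ d : ℕ,
      (∫ ω, (1 / (d : ℝ)) * ∑ j ∈ Finset.range (Nat.floor (β * d)),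
            (if Xstar d (ord d j) ω = 0 then (1 : ℝ) else 0) *
              (Xstar d (ord d j) ω - pstar d (ord d j)) ^ 2
          + (1 / (d : ℝ)) * ∑ j ∈ Finset.Ico (Nat.floor (β * d)) d,
            (Xstar d (ord d j) ω - pstar d (ord d j)) ^ 2 ∂(μ d))
        = (1 / (d : ℝ)) * ∑ j ∈ Finset.range (Nat.floor (β * d)),
            (pstar d (ord d j)) ^ 2 * (1 - pstar d (ord d j))
          + (1 / (d : ℝ)) * ∑ j ∈ Finset.Ico (Nat.floor (β * d)) d,
            pstar d (ord d j) * (1 - pstar d (ord d j))) ∧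
    -- … and converges to the limiting integrals
    Tendsto (fun d : ℕ =>
        (1 / (d : ℝ)) * ∑ j ∈ Finset.range (Nat.floor (β * d)),
            (pstar d (ord d j)) ^ 2 * (1 - pstar d (ord d j))
          + (1 / (d : ℝ)) * ∑ j ∈ Finset.Ico (Nat.floor (β * d)) d,
            pstar d (ord d j) * (1 - pstar d (ord d j)))
      atTop (nhds ((∫ q in (0 : ℝ)..β, (Qstar q) ^ 2 * (1 - Qstar q))
        + ∫ q in β..(1 : ℝ), Qstar q * (1 - Qstar q))) := by
  have hv : ∀ d j, j < d → pstar d (ord d j) ∈ Set.Icc 0 1 := fun d j hj => by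
    obtain ⟨h0, h1⟩ := hp d _ ((hord_bij d).mapsTo hj)
    rw [hpstar]
    exact ⟨le_min h0 (by linarith), (min_le_left _ _).trans h1⟩
  refine ⟨fun d => integral_highlighted_risk (fun j hj => ?_) (hv d)
    (floor_mul_le_of_le_one hβ.2.le d) _, ?_⟩
  · have hi := (hord_bij d).mapsTo hj
    simpa only [← hpstar, ← hXstar] using
      (IsBernoulli.mk (hmeas d _) (hval d _) (hbern d _ hi)).minority (hp d _ hi).1
  have hFc := continuousOn_of_fold hF_mono hFstar hFstar_cont
  have hconv : ∀ t ∈ Set.Icc (0 : ℝ) 1, Tendsto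
      (fun d => empiricalCDF (fun j => pstar d (ord d j)) d t) atTop (𝓝 (Fstar t)) := by
    intro t ht
    refine (tendsto_empiricalCDF_min_one_sub hFc (fun u hu => (hstab u hu (hFc u hu)).congr
      fun d => (empiricalCDF_eq_one_div_mul_sum _ _ _).symm) hFstar ht).congr fun d => ?_
    rw [empiricalCDF_comp_of_bijOn (hord_bij d), funext (hpstar d)]
  obtain rfl : Qstar = quantile Fstar := funext hQ
  have hFstar1 : 1 ≤ Fstar 1 := by norm_num [hFstar]
  have hmono : ∀ d, MonotoneOn (fun j => pstar d (ord d j)) (Set.Iio d) :=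
    fun d i _ j hj hij => hord_mono d i j hij hj
  have hlow := tendsto_one_div_mul_sum_Ico_floor_mul hv hmono hFstar_cont hFstar1 hconv
    (φ := fun x => x ^ 2 * (1 - x)) (by fun_prop) le_rfl hβ.1.le hβ.2.le
  have hhigh := tendsto_one_div_mul_sum_Ico_floor_mul hv hmono hFstar_cont hFstar1 hconv
    (φ := fun x => x * (1 - x)) (by fun_prop) hβ.1.le hβ.2.le le_rfl
  simp only [zero_mul, Nat.floor_zero, one_mul, Nat.floor_natCast, ← range_eq_Ico] at hlow hhigh
  exact hlow.add hhigh

theorem stmt_5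
    -- the triangular array of independent Bernoulli random variables
    {Ω : ℕ → Type*} [∀ d, MeasurableSpace (Ω d)]
    (μ : ∀ d, Measure (Ω d)) [∀ d, IsProbabilityMeasure (μ d)]
    (p : ℕ → ℕ → ℝ) (hp : ∀ d i, i < d → p d i ∈ Set.Icc (0 : ℝ) 1)
    (X : ∀ d, ℕ → Ω d → ℝ)
    (hmeas : ∀ d i, Measurable (X d i))
    (hval : ∀ d i ω, X d i ω = 0 ∨ X d i ω = 1)
    (hbern : ∀ d i, i < d → μ d {ω | X d i ω = 1} = ENNReal.ofReal (p d i))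
    (hindep : ∀ d, iIndepFun
      (fun i : Fin d => X d (i : ℕ)) (μ d))
    -- transformed quantities
    (pstar : ℕ → ℕ → ℝ)
    (hpstar : ∀ d i, pstar d i = min (p d i) (1 - p d i))
    (Xstar : ∀ d, ℕ → Ω d → ℝ)
    (hXstar : ∀ d i ω,
      Xstar d i ω = if p d i ≤ 1 / 2 then X d i ω else 1 - X d i ω)
    -- an ordering of {0,…,d−1} making `pstar` nondecreasing
    (ord : ℕ → ℕ → ℕ)
    (hord_bij : ∀ d, Set.BijOn (ord d) (Set.Iio d) (Set.Iio d))
    (hord_mono : ∀ d j j', j ≤ j' → j' < d →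
      pstar d (ord d j) ≤ pstar d (ord d j'))
    -- the stability assumption
    (F : ℝ → ℝ)
    (hF_mono : MonotoneOn F (Set.Icc 0 1))
    (hF_rc : ∀ t ∈ Set.Ico (0 : ℝ) 1,
      Tendsto F (nhdsWithin t (Set.Ioi t)) (nhds (F t)))
    (hF0 : Tendsto F (nhdsWithin 0 (Set.Ioi 0)) (nhds 0))
    (hF1 : Tendsto F (nhdsWithin 1 (Set.Iio 1)) (nhds 1))
    (hstab : ∀ t ∈ Set.Icc (0 : ℝ) 1, ContinuousWithinAt F (Set.Icc 0 1) t →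
      Tendsto (fun d : ℕ => (1 / (d : ℝ)) *
          ∑ i ∈ Finset.range d, (if p d i ≤ t then (1 : ℝ) else 0))
        atTop (nhds (F t)))
    -- the transformed cdf and its quantile function
    (Fstar : ℝ → ℝ)
    (hFstar : ∀ t, Fstar t = if t ≤ 1 / 2 then F t + 1 - F (1 - t) else 1)
    (hFstar_cont : ContinuousOn Fstar (Set.Icc 0 1))
    (hFstar_mono : MonotoneOn Fstar (Set.Icc 0 1))
    (Qstar : ℝ → ℝ)
    (hQ : ∀ q, Qstar q = sInf {t | t ∈ Set.Icc (0 : ℝ) 1 ∧ q ≤ Fstar t})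
    (β : ℝ) (hβ : β ∈ Set.Ioo (0 : ℝ) 1) :
    -- the normalized naive risk equals the deterministic sum …
    (∀ d : ℕ,
      (∫ ω, (1 / (d : ℝ)) * ∑ j ∈ Finset.range (Nat.floor (β * d)),
            (if Xstar d (ord d j) ω = 0 then (1 : ℝ) else 0) *
              (Xstar d (ord d j) ω - pstar d (ord d j)) ^ 2
          + (1 / (d : ℝ)) * ∑ j ∈ Finset.Ico (Nat.floor (β * d)) d,
            (Xstar d (ord d j) ω - pstar d (ord d j)) ^ 2 ∂(μ d))
        = (1 / (d : ℝ)) * ∑ j ∈ Finset.range (Nat.floor (β * d)),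
            (pstar d (ord d j)) ^ 2 * (1 - pstar d (ord d j))
          + (1 / (d : ℝ)) * ∑ j ∈ Finset.Ico (Nat.floor (β * d)) d,
            pstar d (ord d j) * (1 - pstar d (ord d j))) ∧
    -- … and converges to the limiting integrals
    Tendsto (fun d : ℕ =>
        (1 / (d : ℝ)) * ∑ j ∈ Finset.range (Nat.floor (β * d)),
            (pstar d (ord d j)) ^ 2 * (1 - pstar d (ord d j))
          + (1 / (d : ℝ)) * ∑ j ∈ Finset.Ico (Nat.floor (β * d)) d,
            pstar d (ord d j) * (1 - pstar d (ord d j)))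
      atTop (nhds ((∫ q in (0 : ℝ)..β, (Qstar q) ^ 2 * (1 - Qstar q))
        + ∫ q in β..(1 : ℝ), Qstar q * (1 - Qstar q))) :=
  stmt_5_general μ p hp X hmeas hval hbern pstar hpstar Xstar hXstar ord hord_bij hord_mono F
    hF_mono hstab Fstar hFstar hFstar_cont Qstar hQ β hβ
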